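/- With R = K⟦f₁,…,f_s⟧ as in the context, suppose {f₁,…,f_s} is a basis of R. Then for every f ∈ K⟦x⟧ the decomposition of f is unique in the following sense: if f = g₁ + r₁ = g₂ + r₂ with g₁, g₂ ∈ R and supp(r₁), supp(r₂) ⊆ ℕ∖⟨o(f₁),…,o(f_s)⟩, then r₁ = r₂ and g₁ = g₂. -/

import Mathlib

set_option synthInstance.maxHeartbeats 1000000
set_option maxHeartbeats 1000000

open PowerSeries

/-- The order of a formal power series: the least `i` such that the coefficient of `x^i`
is nonzero (junk value `0` for the zero series). -/
noncomputable def ord (K : Type*) [Field K] (f : PowerSeries K) : ℕ :=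
  sInf {i | coeff i f ≠ 0}

/-- The set of orders of nonzero elements of a subalgebra `R ⊆ K⟦x⟧`. -/
def oSet (K : Type*) [Field K] (R : Subalgebra K (PowerSeries K)) : Set ℕ :=
  {n | ∃ f ∈ R, f ≠ 0 ∧ ord K f = n}

/-- The quotient `K⟦x⟧/R` has finite length as an `R`-module. -/
def FiniteLengthQuot (K : Type*) [Field K] (R : Subalgebra K (PowerSeries K)) : Prop :=
  IsFiniteLength R (PowerSeries K ⧸ LinearMap.range (Algebra.linearMap R (PowerSeries K)))

/-- The closure of a subalgebra of `K⟦x⟧` in the `x`-adic topology: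
`f` belongs to the closure of `S` iff for every `n` there is an element of `S`
agreeing with `f` on all coefficients up to `n`. -/
def adicClosure {K : Type*} [Field K] (S : Subalgebra K (PowerSeries K)) :
    Subalgebra K (PowerSeries K) where
  carrier := {f | ∀ n : ℕ, ∃ p ∈ S, ∀ i ≤ n, coeff i f = coeff i p}
  add_mem' := by
    intro f g hf hg n
    obtain ⟨p, hpS, hp⟩ := hf n
    obtain ⟨q, hqS, hq⟩ := hg n
    exact ⟨p + q, S.add_mem hpS hqS, fun i hi => by
      simp [map_add, hp i hi, hq i hi]⟩
  mul_mem' := by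
    intro f g hf hg n
    obtain ⟨p, hpS, hp⟩ := hf n
    obtain ⟨q, hqS, hq⟩ := hg n
    refine ⟨p * q, S.mul_mem hpS hqS, fun i hi => ?_⟩
    rw [coeff_mul, coeff_mul]
    refine Finset.sum_congr rfl fun ab hab => ?_
    have h : ab.1 + ab.2 = i := by simpa using hab
    rw [hp ab.1 (by omega), hq ab.2 (by omega)]
  algebraMap_mem' := fun r => fun n => ⟨algebraMap K _ r, S.algebraMap_mem r, fun i _ => rfl⟩

/-- `K⟦f₁,…,f_s⟧`, the subalgebra of `K⟦x⟧` consisting of all power series of the form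
`P(f₁,…,f_s)` with `P ∈ K⟦X₁,…,X_s⟧` (for `fᵢ` of positive order), realized as the
`x`-adic closure of the subalgebra generated by `f₁, …, f_s`; this closure coincides with
the image of the substitution homomorphism `K⟦X₁,…,X_s⟧ → K⟦x⟧`, `Xᵢ ↦ fᵢ`. -/
noncomputable def seriesAlgebra {K : Type*} [Field K] {s : ℕ} (f : Fin s → PowerSeries K) :
    Subalgebra K (PowerSeries K) :=
  adicClosure (Algebra.adjoin K (Set.range f))

/-! If `g₁ + r₁ = g₂ + r₂` with `gᵢ ∈ R` and `g₁ ≠ g₂`, then `g₁ - g₂ = r₂ - r₁` is a nonzero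
element of `R`, so its order lies in `o(R)`; but at that order one of `r₁`, `r₂` has a nonzero
coefficient, and the supports of `rᵢ` avoid `o(R)`. -/

theorem coeff_ord_ne_zero {K : Type*} [Field K] {h : PowerSeries K} (h0 : h ≠ 0) :
    coeff (ord K h) h ≠ 0 := by
  have hne : {i | coeff i h ≠ 0}.Nonempty := by
    by_contra hempty
    refine h0 (PowerSeries.ext fun i => ?_)
    by_contra hi
    exact hempty ⟨i, by simpa using hi⟩
  exact Nat.sInf_mem hne

theorem ord_sub_notMem {K : Type*} [Field K] {S : Set ℕ} {r₁ r₂ : PowerSeries K}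
    (hr₁ : ∀ i, coeff i r₁ ≠ 0 → i ∉ S) (hr₂ : ∀ i, coeff i r₂ ≠ 0 → i ∉ S)
    (hne : r₁ ≠ r₂) : ord K (r₁ - r₂) ∉ S := by
  have hcoeff := coeff_ord_ne_zero (sub_ne_zero.mpr hne)
  rw [map_sub] at hcoeff
  by_cases h₁ : coeff (ord K (r₁ - r₂)) r₁ = 0
  · exact hr₂ _ fun h₂ => hcoeff (by rw [h₁, h₂, sub_zero])
  · exact hr₁ _ h₁

theorem eq_and_eq_of_add_eq_add_of_oSet_subset {K : Type*} [Field K]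
    {R : Subalgebra K (PowerSeries K)} {S : Set ℕ} (hRS : oSet K R ⊆ S)
    {g₁ g₂ r₁ r₂ : PowerSeries K} (hg₁ : g₁ ∈ R) (hg₂ : g₂ ∈ R) (hsum : g₁ + r₁ = g₂ + r₂)
    (hr₁ : ∀ i, coeff i r₁ ≠ 0 → i ∉ S) (hr₂ : ∀ i, coeff i r₂ ≠ 0 → i ∉ S) :
    r₁ = r₂ ∧ g₁ = g₂ := by
  have hdiff : g₁ - g₂ = r₂ - r₁ := by linear_combination hsum
  have hr : r₂ = r₁ := by
    by_contra hne
    refine ord_sub_notMem hr₂ hr₁ hne (hRS ⟨g₁ - g₂, R.sub_mem hg₁ hg₂, ?_, ?_⟩)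
    · rwa [hdiff, sub_ne_zero]
    · rw [hdiff]
  exact ⟨hr.symm, by rwa [hr, sub_self, sub_eq_zero] at hdiff⟩

theorem stmt_6_general (K : Type*) [Field K] {s : ℕ} (f : Fin s → PowerSeries K)
    (hbasis : oSet K (seriesAlgebra f)
        = ↑(AddSubmonoid.closure (Set.range fun j => ord K (f j))))
    (F : PowerSeries K) (g₁ g₂ r₁ r₂ : PowerSeries K)
    (hg₁ : g₁ ∈ seriesAlgebra f) (hg₂ : g₂ ∈ seriesAlgebra f)
    (hd₁ : F = g₁ + r₁) (hd₂ : F = g₂ + r₂)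
    (hr₁ : ∀ i : ℕ, coeff i r₁ ≠ 0 →
      i ∉ AddSubmonoid.closure (Set.range fun j => ord K (f j)))
    (hr₂ : ∀ i : ℕ, coeff i r₂ ≠ 0 →
      i ∉ AddSubmonoid.closure (Set.range fun j => ord K (f j))) :
    r₁ = r₂ ∧ g₁ = g₂ :=
  eq_and_eq_of_add_eq_add_of_oSet_subset hbasis.le hg₁ hg₂ (hd₁.symm.trans hd₂) hr₁ hr₂

/-- If `{f₁,…,f_s}` is a basis of `R = K⟦f₁,…,f_s⟧`, then the decomposition `f = g + r`
with `g ∈ R` and `supp(r) ⊆ ℕ ∖ ⟨o(f₁),…,o(f_s)⟩` is unique. -/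
theorem stmt_6 (K : Type*) [Field K] {s : ℕ} (f : Fin s → PowerSeries K)
    (hf0 : ∀ i, f i ≠ 0) (hford : ∀ i, 0 < ord K (f i))
    (hlen : FiniteLengthQuot K (seriesAlgebra f))
    (hbasis : oSet K (seriesAlgebra f)
        = ↑(AddSubmonoid.closure (Set.range fun j => ord K (f j))))
    (F : PowerSeries K) (g₁ g₂ r₁ r₂ : PowerSeries K)
    (hg₁ : g₁ ∈ seriesAlgebra f) (hg₂ : g₂ ∈ seriesAlgebra f)
    (hd₁ : F = g₁ + r₁) (hd₂ : F = g₂ + r₂)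
    (hr₁ : ∀ i : ℕ, coeff i r₁ ≠ 0 →
      i ∉ AddSubmonoid.closure (Set.range fun j => ord K (f j)))
    (hr₂ : ∀ i : ℕ, coeff i r₂ ≠ 0 →
      i ∉ AddSubmonoid.closure (Set.range fun j => ord K (f j))) :
    r₁ = r₂ ∧ g₁ = g₂ :=
  stmt_6_general K f hbasis F g₁ g₂ r₁ r₂ hg₁ hg₂ hd₁ hd₂ hr₁ hr₂
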